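/- Let G be a finite simple graph with at least one vertex and let k ≥ 4 be an even integer. Let λ_min(A(G)) denote the least eigenvalue of the adjacency matrix of G. Then λ_min(A(G)) is an adjacency H-eigenvalue of the generalized power hypergraph G^{k,k/2}, and every adjacency H-eigenvalue of G^{k,k/2} is at least λ_min(A(G)); that is, the least adjacency H-eigenvalue of G^{k,k/2} equals the least adjacency eigenvalue of G. -/

import Mathlib

open Finset

/-- The edge set of the generalized power hypergraph `G^{k, k/2}` (with `s = k/2`):
each edge `{u,v}` of `G` is blown up into the `2s`-set `({u} × Fin s) ∪ ({v} × Fin s)`. -/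
def powerEdges {V : Type*} [Fintype V] [DecidableEq V] (G : SimpleGraph V)
    [DecidableRel G.Adj] (s : ℕ) : Finset (Finset (V × Fin s)) :=
  (Finset.univ.filter fun p : V × V => G.Adj p.1 p.2).image
    (fun p => ({p.1} ×ˢ (Finset.univ : Finset (Fin s)))
        ∪ ({p.2} ×ˢ (Finset.univ : Finset (Fin s))))

/-- `lam` is an adjacency H-eigenvalue of the generalized power hypergraph `G^{k,s}`
(`k = 2s`) with H-eigenvector `x`. -/
def IsAdjHEigPow {V : Type*} [Fintype V] [DecidableEq V] (G : SimpleGraph V)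
    [DecidableRel G.Adj] (k s : ℕ) (lam : ℝ) (x : V × Fin s → ℝ) : Prop :=
  x ≠ 0 ∧ ∀ p : V × Fin s,
    lam * x p ^ (k - 1)
      = ∑ e ∈ (powerEdges G s).filter (fun e => p ∈ e), ∏ w ∈ e.erase p, x w

/-- `lam` is a signless Laplacian H-eigenvalue of the generalized power hypergraph
`G^{k,s}` (`k = 2s`) with H-eigenvector `x`. -/
def IsQHEigPow {V : Type*} [Fintype V] [DecidableEq V] (G : SimpleGraph V)
    [DecidableRel G.Adj] (k s : ℕ) (lam : ℝ) (x : V × Fin s → ℝ) : Prop :=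
  x ≠ 0 ∧ ∀ p : V × Fin s,
    lam * x p ^ (k - 1)
      = (((powerEdges G s).filter (fun e => p ∈ e)).card : ℝ) * x p ^ (k - 1)
        + ∑ e ∈ (powerEdges G s).filter (fun e => p ∈ e), ∏ w ∈ e.erase p, x w

/-!
Write `P v = ∏ j, x (v, j)` for the product of `x` over the block `{v} × Fin s`. Since the edges
of `G^{2s,s}` through `(v, i)` are the blow-ups of the edges `vu` of `G`, the eigen-equation at
`(v, i)` reads `λ x_{(v,i)}^{2s-1} = (∏_{j ≠ i} x_{(v,j)}) (A P)_v`.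

An eigenvector `y` of `A` gives an H-eigenvector: spread an `s`-th root of `|y v|` over the block
`v` and put the sign of `y v` on one coordinate. Then `P = y`, and all entries of a block have
the same square, which turns the right-hand side into `λ x_{(v,i)}^{2s-1}`.

Conversely, multiplying the eigen-equation by `x_{(v,i)}` gives `μ x_{(v,i)}^{2s} = P_v (A P)_v`.
For `μ ≠ 0` the squares are therefore constant on blocks, so `μ P_v² = P_v (A P)_v`: the vector
`P` is nonzero with Rayleigh quotient `μ`, whence `μ ≥ λ_min(A)`. For `μ = 0` use
`λ_min(A) ≤ A_vv = 0`.
-/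

open Matrix

namespace Matrix.IsHermitian

variable {n : Type*} [Fintype n] [DecidableEq n] {A : Matrix n n ℝ} {lam : ℝ}

theorem mul_dotProduct_self_le_of_le_eigenvalues (hA : A.IsHermitian)
    (hLeast : ∀ μ : ℝ, (∃ y : n → ℝ, y ≠ 0 ∧ A *ᵥ y = μ • y) → lam ≤ μ) (y : n → ℝ) :
    lam * (y ⬝ᵥ y) ≤ y ⬝ᵥ A *ᵥ y := by
  have hM : (A - lam • 1).IsHermitian := hA.sub (isHermitian_one.smul (IsSelfAdjoint.all lam))
  have hPSD : (A - lam • 1).PosSemidef := by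
    refine hM.posSemidef_iff_eigenvalues_nonneg.mpr fun i => ?_
    have hAe : A *ᵥ ⇑(hM.eigenvectorBasis i)
        = (hM.eigenvalues i + lam) • ⇑(hM.eigenvectorBasis i) := by
      have := hM.mulVec_eigenvectorBasis i
      rw [sub_mulVec, smul_mulVec, one_mulVec, sub_eq_iff_eq_add] at this
      rw [this, add_smul]
    have := hLeast _
      ⟨_, (WithLp.ofLp_eq_zero 2).ne.2 (hM.eigenvectorBasis.orthonormal.ne_zero i), hAe⟩
    simpa using this
  have := hPSD.dotProduct_mulVec_nonneg y
  simp only [star_trivial, sub_mulVec, dotProduct_sub, smul_mulVec, one_mulVec,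
    dotProduct_smul, smul_eq_mul] at this
  linarith

theorem le_diag_of_le_eigenvalues (hA : A.IsHermitian)
    (hLeast : ∀ μ : ℝ, (∃ y : n → ℝ, y ≠ 0 ∧ A *ᵥ y = μ • y) → lam ≤ μ) (i : n) :
    lam ≤ A i i := by
  simpa using hA.mul_dotProduct_self_le_of_le_eigenvalues hLeast (Pi.single i 1)

end Matrix.IsHermitian

theorem Finset.prod_erase_mul_prod_eq_pow {ι M : Type*} [Fintype ι] [DecidableEq ι]
    [CommMonoid M] {f : ι → M} {i : ι} (hf : ∀ j, f j ^ 2 = f i ^ 2) :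
    (∏ j ∈ univ.erase i, f j) * ∏ j, f j = f i ^ (2 * Fintype.card ι - 1) := by
  have hcard : 1 ≤ Fintype.card ι := Fintype.card_pos_iff.mpr ⟨i⟩
  have hsq : (∏ j ∈ univ.erase i, f j) ^ 2 = (f i ^ 2) ^ (Fintype.card ι - 1) := by
    rw [← prod_pow, prod_congr rfl fun j _ => hf j, prod_const, card_erase_of_mem (mem_univ i),
      card_univ]
  rw [← mul_prod_erase univ f (mem_univ i), mul_left_comm, ← sq, hsq, ← pow_mul, ← pow_succ']
  congr 1
  omega

def blockProd {V : Type*} {s : ℕ} (x : V × Fin s → ℝ) (v : V) : ℝ := ∏ j, x (v, j)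

section PowerEdge

variable {V : Type*} [DecidableEq V] {s : ℕ}

def powerEdge (s : ℕ) (u v : V) : Finset (V × Fin s) :=
  ({u} ×ˢ (univ : Finset (Fin s))) ∪ ({v} ×ˢ (univ : Finset (Fin s)))

lemma mem_powerEdge {u v a : V} {i : Fin s} : (a, i) ∈ powerEdge s u v ↔ a = u ∨ a = v := by
  simp [powerEdge, eq_comm]

lemma powerEdge_comm (u v : V) : powerEdge s u v = powerEdge s v u :=
  union_comm _ _

lemma prod_erase_powerEdge {u v : V} (huv : u ≠ v) (i : Fin s) (x : V × Fin s → ℝ) :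
    ∏ w ∈ (powerEdge s u v).erase (u, i), x w
      = (∏ j ∈ univ.erase i, x (u, j)) * blockProd x v := by
  have hu : ({u} ×ˢ univ : Finset (V × Fin s)).erase (u, i)
      = (univ.erase i).map ⟨Prod.mk u, Prod.mk_right_injective u⟩ := by
    rw [map_erase, singleton_product]
    rfl
  have hv : (u, i) ∉ ({v} ×ˢ univ : Finset (V × Fin s)) := by simpa [eq_comm] using huv
  have hdisj : Disjoint ({u} ×ˢ univ : Finset (V × Fin s)) ({v} ×ˢ univ) := by
    simpa [disjoint_left] using fun _ => huv.symm
  rw [powerEdge, erase_union_distrib, erase_eq_of_notMem hv,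
    prod_union (disjoint_of_subset_left (erase_subset _ _) hdisj), hu, prod_map]
  simp [blockProd]

variable [Fintype V] (G : SimpleGraph V) [DecidableRel G.Adj]

lemma filter_mem_powerEdges (v : V) (i : Fin s) :
    (powerEdges G s).filter (fun e => (v, i) ∈ e)
      = (G.neighborFinset v).image (powerEdge s v) := by
  ext e
  simp only [powerEdges, mem_filter, mem_image, mem_univ, true_and,
    SimpleGraph.mem_neighborFinset]
  constructor
  · rintro ⟨⟨⟨a, b⟩, hab, rfl⟩, hmem⟩
    rcases mem_powerEdge.mp hmem with rfl | rfl
    · exact ⟨b, hab, rfl⟩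
    · exact ⟨a, hab.symm, powerEdge_comm v a⟩
  · rintro ⟨u, hu, rfl⟩
    exact ⟨⟨(v, u), hu, rfl⟩, mem_powerEdge.mpr (Or.inl rfl)⟩

lemma sum_filter_mem_powerEdges_prod_erase (x : V × Fin s → ℝ) (v : V) (i : Fin s) :
    ∑ e ∈ (powerEdges G s).filter (fun e => (v, i) ∈ e), ∏ w ∈ e.erase (v, i), x w
      = (∏ j ∈ univ.erase i, x (v, j)) * (G.adjMatrix ℝ *ᵥ blockProd x) v := by
  have hne {u : V} (hu : u ∈ G.neighborFinset v) : v ≠ u :=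
    G.ne_of_adj ((G.mem_neighborFinset v u).mp hu)
  have hinj : Set.InjOn (powerEdge s v) (G.neighborFinset v) := by
    intro a ha b _ hab
    have : (a, i) ∈ powerEdge s v b := hab ▸ mem_powerEdge.mpr (Or.inr rfl)
    exact (mem_powerEdge.mp this).resolve_left (hne ha).symm
  rw [filter_mem_powerEdges, sum_image hinj, SimpleGraph.adjMatrix_mulVec_apply, mul_sum]
  exact sum_congr rfl fun u hu => prod_erase_powerEdge (hne hu) i x

theorem isAdjHEigPow_iff {μ : ℝ} {x : V × Fin s → ℝ} :
    IsAdjHEigPow G (2 * s) s μ x ↔ x ≠ 0 ∧ ∀ v i, μ * x (v, i) ^ (2 * s - 1)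
      = (∏ j ∈ univ.erase i, x (v, j)) * (G.adjMatrix ℝ *ᵥ blockProd x) v := by
  simp only [IsAdjHEigPow, Prod.forall, sum_filter_mem_powerEdges_prod_erase]

end PowerEdge

section SignedRoot

variable {V : Type*} {s : ℕ} [NeZero s]

noncomputable def signedRoot (s : ℕ) [NeZero s] (y : V → ℝ) (p : V × Fin s) : ℝ :=
  if p.2 = 0 ∧ y p.1 < 0 then -(|y p.1| ^ (s⁻¹ : ℝ)) else |y p.1| ^ (s⁻¹ : ℝ)

lemma sq_signedRoot (y : V → ℝ) (v : V) (i j : Fin s) :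
    signedRoot s y (v, i) ^ 2 = signedRoot s y (v, j) ^ 2 := by
  simp only [signedRoot]
  split_ifs <;> ring

lemma blockProd_signedRoot (y : V → ℝ) (v : V) : blockProd (signedRoot s y) v = y v := by
  set r := |y v| ^ (s⁻¹ : ℝ)
  have hr : r * r ^ (s - 1) = |y v| := by
    rw [← pow_succ', Nat.sub_add_cancel NeZero.one_le]
    exact Real.rpow_inv_natCast_pow (abs_nonneg _) (NeZero.ne s)
  have hrest : ∏ j ∈ univ.erase (0 : Fin s), signedRoot s y (v, j) = r ^ (s - 1) := by
    rw [prod_congr rfl fun j hj =>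
        (by simp [signedRoot, ne_of_mem_erase hj, r] : signedRoot s y (v, j) = r), prod_const,
      card_erase_of_mem (mem_univ _), card_univ, Fintype.card_fin]
  rw [blockProd, ← mul_prod_erase univ _ (mem_univ 0), hrest]
  by_cases hneg : y v < 0
  · rw [signedRoot, if_pos ⟨rfl, hneg⟩, neg_mul, hr, abs_of_neg hneg, neg_neg]
  · rw [signedRoot, if_neg fun h => hneg h.2, hr, abs_of_nonneg (not_lt.mp hneg)]

lemma signedRoot_ne_zero {y : V → ℝ} (hy : y ≠ 0) : signedRoot s y ≠ 0 := by
  intro h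
  refine hy (funext fun v => ?_)
  rw [← blockProd_signedRoot (s := s) y v, h]
  simp [blockProd, NeZero.ne s]

theorem isAdjHEigPow_signedRoot [Fintype V] [DecidableEq V] (G : SimpleGraph V)
    [DecidableRel G.Adj] {lam : ℝ} {y : V → ℝ} (hy : y ≠ 0)
    (hyE : G.adjMatrix ℝ *ᵥ y = lam • y) : IsAdjHEigPow G (2 * s) s lam (signedRoot s y) := by
  refine (isAdjHEigPow_iff G).mpr ⟨signedRoot_ne_zero hy, fun v i => ?_⟩
  have hpow := prod_erase_mul_prod_eq_pow fun j => sq_signedRoot y v j i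
  rw [Fintype.card_fin] at hpow
  change _ * blockProd _ v = _ at hpow
  rw [blockProd_signedRoot] at hpow
  rw [funext (blockProd_signedRoot y), hyE, Pi.smul_apply, smul_eq_mul, ← hpow]
  ring

end SignedRoot

namespace IsAdjHEigPow

variable {V : Type*} [Fintype V] [DecidableEq V] {G : SimpleGraph V} [DecidableRel G.Adj]
  {s : ℕ} {μ : ℝ} {x : V × Fin s → ℝ}

theorem mul_pow_eq (h : IsAdjHEigPow G (2 * s) s μ x) (v : V) (i : Fin s) :
    μ * x (v, i) ^ (2 * s) = blockProd x v * (G.adjMatrix ℝ *ᵥ blockProd x) v := by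
  have hs : 2 * s = 2 * s - 1 + 1 := by have := i.pos; omega
  rw [hs, pow_succ, ← mul_assoc, ((isAdjHEigPow_iff G).mp h).2 v i, blockProd,
    ← mul_prod_erase univ _ (mem_univ i)]
  ring

theorem sq_eq_sq (h : IsAdjHEigPow G (2 * s) s μ x) (hμ : μ ≠ 0) (v : V) (i j : Fin s) :
    x (v, i) ^ 2 = x (v, j) ^ 2 := by
  have hpow : (x (v, i) ^ 2) ^ s = (x (v, j) ^ 2) ^ s := by
    rw [← pow_mul, ← pow_mul]
    exact mul_left_cancel₀ hμ ((h.mul_pow_eq v i).trans (h.mul_pow_eq v j).symm)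
  exact (pow_left_inj₀ (sq_nonneg _) (sq_nonneg _) (by have := i.pos; omega)).mp hpow

theorem blockProd_ne_zero (h : IsAdjHEigPow G (2 * s) s μ x) (hμ : μ ≠ 0) :
    blockProd x ≠ 0 := by
  obtain ⟨⟨v, i⟩, hvi⟩ := Function.ne_iff.mp h.1
  refine Function.ne_iff.mpr ⟨v, prod_ne_zero_iff.mpr fun j _ hj => hvi ?_⟩
  simpa [hj] using (h.sq_eq_sq hμ v j i).symm

theorem dotProduct_mulVec_blockProd [NeZero s] (h : IsAdjHEigPow G (2 * s) s μ x)
    (hμ : μ ≠ 0) :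
    blockProd x ⬝ᵥ G.adjMatrix ℝ *ᵥ blockProd x = μ * (blockProd x ⬝ᵥ blockProd x) := by
  rw [dotProduct, dotProduct, mul_sum]
  refine sum_congr rfl fun v _ => ?_
  have hsq : blockProd x v * blockProd x v = x (v, 0) ^ (2 * s) := by
    rw [← sq, blockProd, ← prod_pow, prod_congr rfl fun j _ => h.sq_eq_sq hμ v j 0, prod_const,
      card_univ, Fintype.card_fin, ← pow_mul, mul_comm]
  rw [hsq, h.mul_pow_eq v 0]

theorem le_of_le_eigenvalues [Nonempty V] [NeZero s] {lam : ℝ}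
    (hLeast : ∀ μ : ℝ, (∃ y : V → ℝ, y ≠ 0 ∧ G.adjMatrix ℝ *ᵥ y = μ • y) → lam ≤ μ)
    (h : IsAdjHEigPow G (2 * s) s μ x) : lam ≤ μ := by
  have hA := G.isHermitian_adjMatrix ℝ
  rcases eq_or_ne μ 0 with rfl | hμ
  · simpa using hA.le_diag_of_le_eigenvalues hLeast (Classical.arbitrary V)
  · have hpos : 0 < blockProd x ⬝ᵥ blockProd x := by
      simpa using dotProduct_self_star_pos_iff.mpr (h.blockProd_ne_zero hμ)
    have := hA.mul_dotProduct_self_le_of_le_eigenvalues hLeast (blockProd x)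
    rw [h.dotProduct_mulVec_blockProd hμ] at this
    exact le_of_mul_le_mul_right this hpos

end IsAdjHEigPow

/-- for a nonempty finite simple graph `G`, if `λ` is the least eigenvalue of
the adjacency matrix `A(G)` (it is an eigenvalue and is `≤` every eigenvalue), then `λ` is
an adjacency H-eigenvalue of `G^{k,k/2}` and every adjacency H-eigenvalue of `G^{k,k/2}`
is at least `λ`; i.e. the least adjacency H-eigenvalue of `G^{k,k/2}` equals the least
adjacency eigenvalue of `G`. -/
theorem stmt15 {V : Type*} [Fintype V] [DecidableEq V] [Nonempty V] (G : SimpleGraph V)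
    [DecidableRel G.Adj] (k s : ℕ) (hk : 4 ≤ k) (hks : k = 2 * s)
    (lam : ℝ)
    (hEig : ∃ y : V → ℝ, y ≠ 0 ∧ (G.adjMatrix ℝ).mulVec y = lam • y)
    (hLeast : ∀ μ : ℝ, (∃ y : V → ℝ, y ≠ 0 ∧ (G.adjMatrix ℝ).mulVec y = μ • y) → lam ≤ μ) :
    (∃ x : V × Fin s → ℝ, IsAdjHEigPow G k s lam x) ∧
      ∀ μ : ℝ, (∃ x : V × Fin s → ℝ, IsAdjHEigPow G k s μ x) → lam ≤ μ := by
  subst hks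
  have : NeZero s := ⟨by omega⟩
  obtain ⟨y, hy, hyE⟩ := hEig
  exact ⟨⟨signedRoot s y, isAdjHEigPow_signedRoot G hy hyE⟩,
    fun μ ⟨x, hx⟩ => hx.le_of_le_eigenvalues hLeast⟩
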